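/- Let (Ω, P) be a probability space and T ≥ 1. Let v_i > 0, v_* > 0, μ_i, μ_*, and Δ > 0 be real constants with W_* − W_i ≥ Δ, where W_i = μ_i·v_i and W_* = μ_*·v_*. Let μ̂_i, μ̂_*, ε_i, ε_* : Ω → ℝ be measurable with ε_i ≥ 0 and ε_* ≥ 0 everywhere, and suppose: (a) P(W_i < (μ̂_i − ε_i)·v_i) ≤ T^{-4}; (b) P(W_* > (μ̂_* + ε_*)·v_*) ≤ T^{-4}; (c) 2·ε_i·v_i < Δ almost surely. Then P((μ̂_* + ε_*)·v_* > (μ̂_i + ε_i)·v_i) ≥ 1 − 2·T^{-4}. -/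

import Mathlib

/-!
If the optimal arm's UCB index is below `W_*`, or arm `i`'s LCB index is above `W_i`, we are on
one of the two bad events. Off them, arm `i`'s UCB index is at most `W_i + 2 εᵢ vᵢ < W_i + Δ ≤ W_*`,
which is at most the optimal arm's UCB index. A union bound over the two bad events (and the null
set where the width condition fails) gives the claim.
-/

open MeasureTheory

theorem ucb_lt_ucb_of_gap {m e v w m' e' v' w' Δ : ℝ} (hlcb : (m - e) * v ≤ w)
    (hwidth : 2 * e * v < Δ) (hgap : w' - w ≥ Δ) (hucb : w' ≤ (m' + e') * v') :
    (m + e) * v < (m' + e') * v' := by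
  linarith [show (m + e) * v = (m - e) * v + 2 * e * v by ring]

theorem measure_compl_le_add_of_ae_compl_imp {Ω : Type*} [MeasurableSpace Ω] {μ : Measure Ω}
    {s A B : Set Ω} (h : ∀ᵐ ω ∂μ, ω ∉ s → ω ∈ A ∨ ω ∈ B) : μ sᶜ ≤ μ A + μ B :=
  calc μ sᶜ ≤ μ (A ∪ B) := measure_mono_ae h
    _ ≤ μ A + μ B := measure_union_le A B

theorem one_sub_measure_compl_le {Ω : Type*} [MeasurableSpace Ω] (μ : Measure Ω)
    [IsProbabilityMeasure μ] (s : Set Ω) : 1 - μ sᶜ ≤ μ s :=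
  tsub_le_iff_right.mpr (measure_univ (μ := μ) ▸ measure_univ_le_add_compl s)

theorem deltaUCB_optimal_ucb_exceeds_whp_general
    {Ω : Type*} [MeasurableSpace Ω] (P : Measure Ω) [IsProbabilityMeasure P]
    (T : ℝ)
    (vi vs μi μs Δ : ℝ)
    (hgap : μs * vs - μi * vi ≥ Δ)
    (μhi μhs εi εs : Ω → ℝ)
    (ha : P {ω | μi * vi < (μhi ω - εi ω) * vi} ≤ ENNReal.ofReal (T ^ (-4 : ℤ)))
    (hb : P {ω | μs * vs > (μhs ω + εs ω) * vs} ≤ ENNReal.ofReal (T ^ (-4 : ℤ)))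
    (hc : ∀ᵐ ω ∂P, 2 * εi ω * vi < Δ) :
    P {ω | (μhs ω + εs ω) * vs > (μhi ω + εi ω) * vi} ≥
      1 - 2 * ENNReal.ofReal (T ^ (-4 : ℤ)) := by
  set G := {ω | (μhs ω + εs ω) * vs > (μhi ω + εi ω) * vi}
  have hbad : ∀ᵐ ω ∂P, ω ∉ G →
      ω ∈ {ω | μi * vi < (μhi ω - εi ω) * vi} ∨ ω ∈ {ω | μs * vs > (μhs ω + εs ω) * vs} := by
    filter_upwards [hc] with ω hwidth hωG
    by_contra! hgood
    exact hωG (ucb_lt_ucb_of_gap hgood.1 hwidth hgap hgood.2)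
  calc 1 - 2 * ENNReal.ofReal (T ^ (-4 : ℤ)) ≤ 1 - P Gᶜ := by
        gcongr
        exact (measure_compl_le_add_of_ae_compl_imp hbad).trans ((add_le_add ha hb).trans_eq
          (two_mul _).symm)
    _ ≤ P G := one_sub_measure_compl_le P G

/-- with high probability the optimal arm's social-welfare UCB index
strictly exceeds that of any arm `i` outside `S_Δ` (gap at least `Δ`), given the
two bad events have probability at most `T⁻⁴` each and the confidence width of
arm `i` is almost surely below `Δ`. -/
theorem deltaUCB_optimal_ucb_exceeds_whp
    {Ω : Type*} [MeasurableSpace Ω] (P : Measure Ω) [IsProbabilityMeasure P]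
    (T : ℝ) (hT : 1 ≤ T)
    (vi vs μi μs Δ : ℝ) (hvi : 0 < vi) (hvs : 0 < vs) (hΔ : 0 < Δ)
    (hgap : μs * vs - μi * vi ≥ Δ)
    (μhi μhs εi εs : Ω → ℝ)
    (hm1 : Measurable μhi) (hm2 : Measurable μhs)
    (hm3 : Measurable εi) (hm4 : Measurable εs)
    (hεi : ∀ ω, 0 ≤ εi ω) (hεs : ∀ ω, 0 ≤ εs ω)
    (ha : P {ω | μi * vi < (μhi ω - εi ω) * vi} ≤ ENNReal.ofReal (T ^ (-4 : ℤ)))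
    (hb : P {ω | μs * vs > (μhs ω + εs ω) * vs} ≤ ENNReal.ofReal (T ^ (-4 : ℤ)))
    (hc : ∀ᵐ ω ∂P, 2 * εi ω * vi < Δ) :
    P {ω | (μhs ω + εs ω) * vs > (μhi ω + εi ω) * vi} ≥
      1 - 2 * ENNReal.ofReal (T ^ (-4 : ℤ)) :=
  deltaUCB_optimal_ucb_exceeds_whp_general P T vi vs μi μs Δ hgap μhi μhs εi εs ha hb hc
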